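/- Let φ ∈ L²(γ). Then the even part φ_even and the odd part φ_odd of φ both lie in L²(γ), and the even part of the dual activation φ̂ equals the dual activation of φ_even, while the odd part of φ̂ equals the dual activation of φ_odd; that is, (φ̂)_even = (φ_even)^∧ and (φ̂)_odd = (φ_odd)^∧ on [−1,1]. -/

import Mathlib

open MeasureTheory ProbabilityTheory Filter Set

noncomputable section

/-- The standard Gaussian measure `N(0,1)` on `ℝ`. -/
def stdGaussian : Measure ℝ := gaussianReal 0 1

/-- The dual activation `φ̂(t) = E[φ(σ₊X + σ₋Y) φ(σ₊X − σ₋Y)]` with `X, Y` i.i.d. `N(0,1)`,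
`σ₊ = √((1+t)/2)`, `σ₋ = √((1−t)/2)`. -/
def dualAct (φ : ℝ → ℝ) (t : ℝ) : ℝ :=
  ∫ p : ℝ × ℝ,
    φ (Real.sqrt ((1 + t) / 2) * p.1 + Real.sqrt ((1 - t) / 2) * p.2) *
    φ (Real.sqrt ((1 + t) / 2) * p.1 - Real.sqrt ((1 - t) / 2) * p.2)
    ∂(stdGaussian.prod stdGaussian)

/-- The even part of a function. -/
def evenPart (f : ℝ → ℝ) (x : ℝ) : ℝ := (f x + f (-x)) / 2

/-- The odd part of a function. -/
def oddPart (f : ℝ → ℝ) (x : ℝ) : ℝ := (f x - f (-x)) / 2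

/-!
Write `u = a x + b y`, `v = a x - b y` with `a = σ₊`, `b = σ₋`, and polarize `φ̂` to
`X(f, g)(t) = E[f(u) g(v)]`. The law `γ ⊗ γ` is invariant under `(x, y) ↦ (-x, -y)`, under
`(x, y) ↦ (x, -y)` (which exchanges `u` and `v`) and under `(x, y) ↦ (y, x)` (which exchanges
`σ₊` and `σ₋`, i.e. `t` and `-t`, and turns `v` into `-v`). Hence reflecting both arguments of
`X` does not change it, `X` is symmetric, and `X(f, g)(-t) = X(f, g ∘ (-·))(t)`. Expanding
`X(φ_ε, φ_ε)` for `φ_ε = (φ + ε φ ∘ (-·)) / 2` bilinearly then gives `(φ̂(t) + ε φ̂(-t)) / 2`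
whenever `ε² = 1`. The expansion is legitimate because `u` and `v` are again `γ`-distributed, so
all products are products of two `L²(γ)` functions.
-/

local notation "γ" => (_root_.stdGaussian : Measure ℝ)

local notation "γ₂" => Measure.prod γ γ

instance : IsProbabilityMeasure γ := by unfold _root_.stdGaussian; infer_instance

def crossDualAct (f g : ℝ → ℝ) (t : ℝ) : ℝ :=
  ∫ p : ℝ × ℝ,
    f (Real.sqrt ((1 + t) / 2) * p.1 + Real.sqrt ((1 - t) / 2) * p.2) *
    g (Real.sqrt ((1 + t) / 2) * p.1 - Real.sqrt ((1 - t) / 2) * p.2) ∂γ₂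

lemma crossDualAct_self (φ : ℝ → ℝ) : crossDualAct φ φ = dualAct φ := rfl

def symPart (ε : ℝ) (f : ℝ → ℝ) (x : ℝ) : ℝ := (f x + ε * f (-x)) / 2

lemma evenPart_eq_symPart : evenPart = symPart 1 := by
  ext f x
  simp [evenPart, symPart]

lemma oddPart_eq_symPart : oddPart = symPart (-1) := by
  ext f x
  simp [oddPart, symPart, sub_eq_add_neg]

lemma sq_sqrt_add_sq_sqrt {t : ℝ} (ht : t ∈ Icc (-1 : ℝ) 1) :
    Real.sqrt ((1 + t) / 2) ^ 2 + Real.sqrt ((1 - t) / 2) ^ 2 = 1 := by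
  rw [Real.sq_sqrt (by linarith [ht.1]), Real.sq_sqrt (by linarith [ht.2])]
  ring

lemma measurePreserving_neg_stdGaussian : MeasurePreserving (fun x : ℝ => -x) γ γ :=
  ⟨measurable_neg, by simpa [_root_.stdGaussian] using gaussianReal_map_neg (μ := 0) (v := 1)⟩

lemma measurePreserving_const_mul_stdGaussian (c : ℝ) :
    MeasurePreserving (c * ·) γ (gaussianReal 0 (c ^ 2).toNNReal) := by
  refine ⟨measurable_const_mul c, ?_⟩
  rw [_root_.stdGaussian, gaussianReal_map_const_mul, mul_zero, mul_one]
  congr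
  exact (max_eq_left (sq_nonneg c)).symm

lemma measurePreserving_mul_fst_add_mul_snd_stdGaussian {a b : ℝ} (h : a ^ 2 + b ^ 2 = 1) :
    MeasurePreserving (fun p : ℝ × ℝ => a * p.1 + b * p.2) γ₂ γ := by
  have hadd : MeasurePreserving (fun q : ℝ × ℝ => q.1 + q.2)
      ((gaussianReal 0 (a ^ 2).toNNReal).prod (gaussianReal 0 (b ^ 2).toNNReal)) γ := by
    refine ⟨measurable_fst.add measurable_snd, ?_⟩
    rw [← Measure.conv, gaussianReal_conv_gaussianReal, _root_.stdGaussian,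
      ← Real.toNNReal_add (sq_nonneg a) (sq_nonneg b), h, Real.toNNReal_one, add_zero]
  exact hadd.comp ((measurePreserving_const_mul_stdGaussian a).prod
    (measurePreserving_const_mul_stdGaussian b))

lemma memLp_comp_neg {f : ℝ → ℝ} (hf : MemLp f 2 γ) : MemLp (fun x => f (-x)) 2 γ :=
  hf.comp_measurePreserving measurePreserving_neg_stdGaussian

lemma memLp_symPart {f : ℝ → ℝ} (hf : MemLp f 2 γ) (ε : ℝ) : MemLp (symPart ε f) 2 γ := by
  convert (hf.add ((memLp_comp_neg hf).const_mul ε)).const_mul 2⁻¹ using 1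
  ext x
  simp only [symPart, Pi.add_apply]
  ring

lemma integrable_mul_comp_add_comp_sub {f g : ℝ → ℝ} (hf : MemLp f 2 γ) (hg : MemLp g 2 γ)
    {a b : ℝ} (h : a ^ 2 + b ^ 2 = 1) :
    Integrable (fun p : ℝ × ℝ => f (a * p.1 + b * p.2) * g (a * p.1 - b * p.2)) γ₂ := by
  have hf' := hf.comp_measurePreserving (measurePreserving_mul_fst_add_mul_snd_stdGaussian h)
  have hg' := hg.comp_measurePreserving
    (measurePreserving_mul_fst_add_mul_snd_stdGaussian (a := a) (b := -b) (by rwa [neg_sq]))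
  convert hf'.integrable_mul hg' using 1
  ext p
  simp [sub_eq_add_neg]

section Symmetries

variable (f g : ℝ → ℝ) (t : ℝ)

lemma crossDualAct_comp_neg :
    crossDualAct (fun x => f (-x)) (fun x => g (-x)) t = crossDualAct f g t := by
  have hneg : MeasurePreserving (MeasurableEquiv.neg (ℝ × ℝ)) γ₂ γ₂ :=
    measurePreserving_neg_stdGaussian.prod measurePreserving_neg_stdGaussian
  rw [crossDualAct, ← hneg.integral_comp']
  congr 1 with p
  simp only [MeasurableEquiv.neg_apply, Prod.fst_neg, Prod.snd_neg]
  ring_nf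

lemma crossDualAct_comm : crossDualAct f g t = crossDualAct g f t := by
  have hneg : MeasurePreserving (Prod.map id fun y : ℝ => -y) γ₂ γ₂ :=
    (MeasurePreserving.id γ).prod measurePreserving_neg_stdGaussian
  rw [crossDualAct, ← hneg.integral_comp
    (MeasurableEmbedding.id.prodMap (MeasurableEquiv.neg ℝ).measurableEmbedding)]
  congr 1 with p
  simp only [Prod.map_fst, Prod.map_snd, id]
  ring_nf

lemma crossDualAct_neg : crossDualAct f g (-t) = crossDualAct f (fun x => g (-x)) t := by
  rw [crossDualAct, ← integral_prod_swap]
  simp only [crossDualAct, Prod.fst_swap, Prod.snd_swap, sub_neg_eq_add, ← sub_eq_add_neg]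
  congr 1 with p
  ring_nf

end Symmetries

lemma crossDualAct_symPart_left {f g : ℝ → ℝ} (hf : MemLp f 2 γ) (hg : MemLp g 2 γ) {t : ℝ}
    (ht : t ∈ Icc (-1 : ℝ) 1) (ε : ℝ) :
    crossDualAct (symPart ε f) g t
      = (crossDualAct f g t + ε * crossDualAct (fun x => f (-x)) g t) / 2 := by
  have h := sq_sqrt_add_sq_sqrt ht
  have h₁ := integrable_mul_comp_add_comp_sub hf hg h
  have h₂ := integrable_mul_comp_add_comp_sub (memLp_comp_neg hf) hg h
  rw [crossDualAct, crossDualAct, crossDualAct, ← integral_const_mul,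
    ← integral_add h₁ (h₂.const_mul ε), ← integral_div]
  congr 1 with p
  simp only [symPart]
  ring

lemma crossDualAct_symPart_right {f g : ℝ → ℝ} (hf : MemLp f 2 γ) (hg : MemLp g 2 γ) {t : ℝ}
    (ht : t ∈ Icc (-1 : ℝ) 1) (ε : ℝ) :
    crossDualAct f (symPart ε g) t
      = (crossDualAct f g t + ε * crossDualAct f (fun x => g (-x)) t) / 2 := by
  rw [crossDualAct_comm, crossDualAct_symPart_left hg hf ht, crossDualAct_comm g,
    crossDualAct_comm _ f]

lemma dualAct_symPart {φ : ℝ → ℝ} (hφ : MemLp φ 2 γ) {ε : ℝ} (hε : ε ^ 2 = 1) {t : ℝ}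
    (ht : t ∈ Icc (-1 : ℝ) 1) : dualAct (symPart ε φ) t = symPart ε (dualAct φ) t := by
  rw [← crossDualAct_self, ← crossDualAct_self,
    crossDualAct_symPart_left hφ (memLp_symPart hφ ε) ht,
    crossDualAct_symPart_right hφ hφ ht, crossDualAct_symPart_right (memLp_comp_neg hφ) hφ ht,
    crossDualAct_comp_neg, crossDualAct_comm (fun x => φ (-x)), symPart, crossDualAct_neg]
  linear_combination crossDualAct φ φ t / 4 * hε

theorem dualAct_evenPart_oddPart (φ : ℝ → ℝ) (hφ : MemLp φ 2 stdGaussian) :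
    MemLp (evenPart φ) 2 stdGaussian ∧
    MemLp (oddPart φ) 2 stdGaussian ∧
    (∀ t ∈ Set.Icc (-1 : ℝ) 1, evenPart (dualAct φ) t = dualAct (evenPart φ) t) ∧
    (∀ t ∈ Set.Icc (-1 : ℝ) 1, oddPart (dualAct φ) t = dualAct (oddPart φ) t) := by
  rw [evenPart_eq_symPart, oddPart_eq_symPart]
  exact ⟨memLp_symPart hφ 1, memLp_symPart hφ (-1),
    fun t ht => (dualAct_symPart hφ (one_pow 2) ht).symm,
    fun t ht => (dualAct_symPart hφ (by norm_num) ht).symm⟩
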